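/- arXiv:2206.09714 — 3 statements merged into one kernel-verified Lean document; each statement's English description precedes it below -/
import Mathlib

section
/- For the piecewise affine bistable nonlinearity, the explicit speed c_ex = (1−2α)·√( m·a / ((1+mσ)²·α(1−α) + m·τ·(2α−1)²) ) satisfies the matching condition √(Δ(c_ex))·(1−2α) = c_ex·(1+mσ), where Δ(c) = c²(1+σm)² + 4(a − τc²)m, provided α ∈ (0, 1/2), a, m > 0, τ ≥ 0, σ ∈ [0, τ], and c_ex² < a/τ when τ > 0. -/
/-! Writing `D = (1 + mσ)²α(1 - α) + mτ(2α - 1)²`, the speed is chosen so that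
`c_ex² D = (1 - 2α)² m a`. Substituting this into `Δ(c_ex)(1 - 2α)²` and using
`(1 - 2α)² + 4α(1 - α) = 1` collapses it to the perfect square `(c_ex (1 + mσ))²`;
both `c_ex` and `1 + mσ` are nonnegative, so taking square roots gives the matching condition. -/

open Real

lemma sqrt_mul_eq_of_mul_sq_eq {x k y : ℝ} (hk : 0 ≤ k) (hy : 0 ≤ y) (h : x * k ^ 2 = y ^ 2) :
    √x * k = y := by
  rw [← sqrt_sq hk, ← sqrt_mul' x (sq_nonneg k), h, sqrt_sq hy]

lemma mul_sqrt_div_sq_mul {k q D : ℝ} (hq : 0 ≤ q) (hD : 0 < D) :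
    (k * √(q / D)) ^ 2 * D = k ^ 2 * q := by
  rw [mul_pow, sq_sqrt (div_nonneg hq hD.le)]
  field_simp

lemma speed_denom_pos {m τ σ α : ℝ} (hm : 0 < m) (hτ : 0 ≤ τ) (hσ : 0 ≤ σ)
    (hα : α ∈ Set.Ioo (0 : ℝ) 1) :
    0 < (1 + m * σ) ^ 2 * α * (1 - α) + m * τ * (2 * α - 1) ^ 2 := by
  obtain ⟨hα0, hα1⟩ := hα
  have hmσ : 0 < 1 + m * σ := by positivity
  have : 0 < (1 + m * σ) ^ 2 * α * (1 - α) := by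
    have : 0 < 1 - α := by linarith
    positivity
  positivity

lemma discriminant_mul_sq_eq_of_sq_mul_denom {a m τ σ α c : ℝ}
    (hc : c ^ 2 * ((1 + m * σ) ^ 2 * α * (1 - α) + m * τ * (2 * α - 1) ^ 2)
      = (1 - 2 * α) ^ 2 * (m * a)) :
    (c ^ 2 * (1 + σ * m) ^ 2 + 4 * (a - τ * c ^ 2) * m) * (1 - 2 * α) ^ 2
      = (c * (1 + m * σ)) ^ 2 := by
  linear_combination (-4) * hc

theorem pwl_exact_speed_general (a m τ σ α : ℝ) (ha : 0 < a) (hm : 0 < m) (hτ : 0 ≤ τ)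
    (hσ : σ ∈ Set.Icc 0 τ) (hα : α ∈ Set.Ioo (0:ℝ) (1/2))
    (Δ : ℝ → ℝ) (hΔ : ∀ c, Δ c = c ^ 2 * (1 + σ * m) ^ 2 + 4 * (a - τ * c ^ 2) * m)
    (cex : ℝ)
    (hcex : cex = (1 - 2 * α) *
      Real.sqrt (m * a / ((1 + m * σ) ^ 2 * α * (1 - α) + m * τ * (2 * α - 1) ^ 2))) :
    Real.sqrt (Δ cex) * (1 - 2 * α) = cex * (1 + m * σ) := by
  obtain ⟨hα0, hα12⟩ := hα
  have h12α : 0 ≤ 1 - 2 * α := by linarith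
  have hD := speed_denom_pos hm hτ hσ.1 ⟨hα0, by linarith⟩
  have hcex_nonneg : 0 ≤ cex := hcex ▸ mul_nonneg h12α (sqrt_nonneg _)
  have hcex_sq : cex ^ 2 * ((1 + m * σ) ^ 2 * α * (1 - α) + m * τ * (2 * α - 1) ^ 2)
      = (1 - 2 * α) ^ 2 * (m * a) := hcex ▸ mul_sqrt_div_sq_mul (by positivity) hD
  have hmσ : 0 ≤ 1 + m * σ := add_nonneg zero_le_one (mul_nonneg hm.le hσ.1)
  refine sqrt_mul_eq_of_mul_sq_eq h12α (mul_nonneg hcex_nonneg hmσ) ?_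
  rw [hΔ]
  exact discriminant_mul_sq_eq_of_sq_mul_denom hcex_sq

theorem pwl_exact_speed (a m τ σ α : ℝ) (ha : 0 < a) (hm : 0 < m) (hτ : 0 ≤ τ)
    (hσ : σ ∈ Set.Icc 0 τ) (hα : α ∈ Set.Ioo (0:ℝ) (1/2))
    (Δ : ℝ → ℝ) (hΔ : ∀ c, Δ c = c ^ 2 * (1 + σ * m) ^ 2 + 4 * (a - τ * c ^ 2) * m)
    (cex : ℝ)
    (hcex : cex = (1 - 2 * α) *
      Real.sqrt (m * a / ((1 + m * σ) ^ 2 * α * (1 - α) + m * τ * (2 * α - 1) ^ 2)))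
    (hsub : 0 < τ → cex ^ 2 < a / τ) :
    Real.sqrt (Δ cex) * (1 - 2 * α) = cex * (1 + m * σ) :=
  pwl_exact_speed_general a m τ σ α ha hm hτ hσ hα Δ hΔ cex hcex
end

section
/- For α ∈ (0,1), α ≠ 1/2, and σ ∈ [0,τ] with τ > 0 and m > 0, one has α(1−α)/((1+mσ)²·α(1−α) + mτ(2α−1)²) < 1/((1+mσ)² + 4mτ(2α−1)²) ≤ 1; consequently the hyperbolic speed c_ex = c₀·√(α(1−α)/((1+σm)²α(1−α)+τm(2α−1)²)) is strictly smaller than the parabolic speed c₀ > 0. -/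
/-! Write `p = α(1-α)` and `d = 2α-1`, so that `d² = 1 - 4p`. Cross-multiplying, the strict
inequality between the two ratios reduces to `4p · m τ d² < m τ d²`, which is `p < 1/4`, i.e.
`α ≠ 1/2`. The second ratio is at most `1` because `(1 + mσ)² ≥ 1`, so the first one is below `1`
and so is its square root, the factor by which `c_ex` falls short of `c₀`. -/

theorem sq_two_mul_sub_one_pos {α : ℝ} (hα : α ≠ 1 / 2) : 0 < (2 * α - 1) ^ 2 :=
  sq_pos_of_ne_zero fun h => hα (by linarith)

theorem mul_one_sub_lt_quarter {α : ℝ} (hα : α ≠ 1 / 2) : α * (1 - α) < 1 / 4 := by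
  nlinarith [sq_two_mul_sub_one_pos hα]

theorem mul_one_sub_div_lt_one_div {α a b : ℝ} (hα : α ∈ Set.Ioo 0 1) (hαh : α ≠ 1 / 2)
    (ha : 0 < a) (hb : 0 < b) :
    α * (1 - α) / (a * α * (1 - α) + b * (2 * α - 1) ^ 2)
      < 1 / (a + 4 * b * (2 * α - 1) ^ 2) := by
  have hp : 0 < α * (1 - α) := mul_pos hα.1 (sub_pos.2 hα.2)
  have hq : 0 < b * (2 * α - 1) ^ 2 := mul_pos hb (sq_two_mul_sub_one_pos hαh)
  have hquarter := mul_one_sub_lt_quarter hαh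
  rw [div_lt_div_iff₀ (by nlinarith) (by nlinarith)]
  nlinarith [mul_pos hq (by linarith : 0 < 1 - 4 * (α * (1 - α)))]

theorem hyperbolic_slower_pwl (m τ σ α c₀ : ℝ) (hm : 0 < m) (hτ : 0 < τ)
    (hσ : σ ∈ Set.Icc 0 τ) (hα : α ∈ Set.Ioo (0:ℝ) 1) (hαh : α ≠ 1/2) (hc₀ : 0 < c₀)
    (cex : ℝ)
    (hcex : cex = c₀ * Real.sqrt (α * (1 - α) /
      ((1 + σ * m) ^ 2 * α * (1 - α) + τ * m * (2 * α - 1) ^ 2))) :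
    α * (1 - α) / ((1 + m * σ) ^ 2 * α * (1 - α) + m * τ * (2 * α - 1) ^ 2)
        < 1 / ((1 + m * σ) ^ 2 + 4 * m * τ * (2 * α - 1) ^ 2)
    ∧ 1 / ((1 + m * σ) ^ 2 + 4 * m * τ * (2 * α - 1) ^ 2) ≤ 1
    ∧ cex < c₀ := by
  have hmσ : 1 ≤ (1 + m * σ) ^ 2 :=
    one_le_pow₀ (le_add_of_nonneg_right (mul_nonneg hm.le hσ.1))
  have hlt : α * (1 - α) / ((1 + m * σ) ^ 2 * α * (1 - α) + m * τ * (2 * α - 1) ^ 2)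
      < 1 / ((1 + m * σ) ^ 2 + 4 * m * τ * (2 * α - 1) ^ 2) := by
    simpa only [mul_assoc] using
      mul_one_sub_div_lt_one_div hα hαh (zero_lt_one.trans_le hmσ) (mul_pos hm hτ)
  have hden : 1 ≤ (1 + m * σ) ^ 2 + 4 * m * τ * (2 * α - 1) ^ 2 := by
    nlinarith [mul_pos hm hτ, sq_nonneg (2 * α - 1)]
  have hle : 1 / ((1 + m * σ) ^ 2 + 4 * m * τ * (2 * α - 1) ^ 2) ≤ 1 :=
    div_le_one_of_le₀ hden (zero_le_one.trans hden)
  refine ⟨hlt, hle, ?_⟩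
  have hratio : α * (1 - α) / ((1 + σ * m) ^ 2 * α * (1 - α) + τ * m * (2 * α - 1) ^ 2) < 1 := by
    simpa only [mul_comm σ m, mul_comm τ m] using hlt.trans_le hle
  rw [hcex]
  exact mul_lt_of_lt_one_right hc₀ ((Real.sqrt_lt' one_pos).2 (by simpa using hratio))
end

section
/- Suppose W : ℝ → ℝ is C¹ with W'(u₀) ≠ 0 for some u₀, and φ : ℝ → ℝ is a C² solution of (a − τc²)φ'' + c·(φ + σW'(φ))' − W'(φ) = 0 on ℝ, with φ, φ' and relevant quantities integrable, φ(−∞) = 1, φ(+∞) = 0, φ' → 0 at ±∞, and ∫_ℝ [1 + σW''(φ)]·(φ')² dx > 0. Then c = (W(0) − W(1)) / ∫_ℝ [1 + σW''(φ)](φ')² dx. In particular c > 0 if and only if W(1) < W(0). -/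
/-!
Multiplying the travelling-wave equation by `φ'` shows that the energy
`E = (a - τc²)/2 · (φ')² - W(φ)` satisfies `E' = -c (1 + σ W''(φ)) (φ')²`.
Since `φ' → 0` at both ends, `E(-∞) = -W(1)` and `E(+∞) = -W(0)`, so integrating over `ℝ`
gives `c · ∫ (1 + σ W''(φ)) (φ')² = W(0) - W(1)`; the integral is positive, which yields both
the formula for `c` and its sign.
-/

open MeasureTheory Filter Topology

section WaveEnergy

variable (κ : ℝ) (W φ : ℝ → ℝ)

noncomputable def waveEnergy (ξ : ℝ) : ℝ := κ / 2 * deriv φ ξ ^ 2 - W (φ ξ)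

variable {κ W φ}

theorem hasDerivAt_waveEnergy {ξ : ℝ} (hW : DifferentiableAt ℝ W (φ ξ))
    (hφ : DifferentiableAt ℝ φ ξ) (hφ' : DifferentiableAt ℝ (deriv φ) ξ) :
    HasDerivAt (waveEnergy κ W φ)
      ((κ * deriv (deriv φ) ξ - deriv W (φ ξ)) * deriv φ ξ) ξ := by
  have hsq : HasDerivAt (fun ξ => deriv φ ξ ^ 2) (2 * deriv φ ξ * deriv (deriv φ) ξ) ξ := by
    simpa using hφ'.hasDerivAt.fun_pow 2
  refine ((hsq.const_mul (κ / 2)).sub (hW.hasDerivAt.comp ξ hφ.hasDerivAt)).congr_deriv ?_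
  ring

theorem tendsto_waveEnergy {l : Filter ℝ} {u : ℝ} (hW : ContinuousAt W u)
    (hφ : Tendsto φ l (𝓝 u)) (hφ' : Tendsto (deriv φ) l (𝓝 0)) :
    Tendsto (waveEnergy κ W φ) l (𝓝 (-W u)) := by
  unfold waveEnergy
  simpa using ((hφ'.pow 2).const_mul (κ / 2)).sub (hW.tendsto.comp hφ)

end WaveEnergy

theorem deriv_add_const_mul_deriv_comp {W φ : ℝ → ℝ} {ξ : ℝ} (σ : ℝ)
    (hW' : DifferentiableAt ℝ (deriv W) (φ ξ)) (hφ : DifferentiableAt ℝ φ ξ) :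
    deriv (fun ξ => φ ξ + σ * deriv W (φ ξ)) ξ
      = (1 + σ * deriv (deriv W) (φ ξ)) * deriv φ ξ := by
  have h : HasDerivAt (fun ξ => φ ξ + σ * deriv W (φ ξ))
      (deriv φ ξ + σ * (deriv (deriv W) (φ ξ) * deriv φ ξ)) ξ :=
    hφ.hasDerivAt.add ((hW'.hasDerivAt.comp ξ hφ.hasDerivAt).const_mul σ)
  rw [h.deriv]
  ring

theorem hasDerivAt_waveEnergy_of_ode {κ σ c : ℝ} {W φ : ℝ → ℝ}
    (hW : Differentiable ℝ W) (hW' : Differentiable ℝ (deriv W))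
    (hφ : Differentiable ℝ φ) (hφ' : Differentiable ℝ (deriv φ))
    (hODE : ∀ ξ, κ * deriv (deriv φ) ξ
        + c * deriv (fun ξ => φ ξ + σ * deriv W (φ ξ)) ξ - deriv W (φ ξ) = 0) (ξ : ℝ) :
    HasDerivAt (waveEnergy κ W φ)
      (-c * ((1 + σ * deriv (deriv W) (φ ξ)) * deriv φ ξ ^ 2)) ξ := by
  have hξ := hODE ξ
  rw [deriv_add_const_mul_deriv_comp σ (hW' _) (hφ ξ)] at hξ
  convert hasDerivAt_waveEnergy (κ := κ) (hW _) (hφ ξ) (hφ' ξ) using 1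
  linear_combination (-deriv φ ξ) * hξ

theorem mul_integral_dissipation_eq {κ σ c u v : ℝ} {W φ : ℝ → ℝ}
    (hW : Differentiable ℝ W) (hW' : Differentiable ℝ (deriv W))
    (hφ : Differentiable ℝ φ) (hφ' : Differentiable ℝ (deriv φ))
    (hODE : ∀ ξ, κ * deriv (deriv φ) ξ
        + c * deriv (fun ξ => φ ξ + σ * deriv W (φ ξ)) ξ - deriv W (φ ξ) = 0)
    (hminus : Tendsto φ atBot (𝓝 u)) (hplus : Tendsto φ atTop (𝓝 v))
    (hd_minus : Tendsto (deriv φ) atBot (𝓝 0)) (hd_plus : Tendsto (deriv φ) atTop (𝓝 0))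
    (hint : Integrable (fun x => (1 + σ * deriv (deriv W) (φ x)) * deriv φ x ^ 2)) :
    c * ∫ x, (1 + σ * deriv (deriv W) (φ x)) * deriv φ x ^ 2 = W v - W u := by
  have hFTC := integral_of_hasDerivAt_of_tendsto
    (hasDerivAt_waveEnergy_of_ode hW hW' hφ hφ' hODE) (hint.const_mul (-c))
    (tendsto_waveEnergy hW.continuous.continuousAt hminus hd_minus)
    (tendsto_waveEnergy hW.continuous.continuousAt hplus hd_plus)
  rw [integral_const_mul] at hFTC
  linarith

theorem speed_formula_general (a τ σ c : ℝ)
    (W φ : ℝ → ℝ) (hW : ContDiff ℝ 2 W) (hφ : ContDiff ℝ 2 φ)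
    (hODE : ∀ ξ, (a - τ * c ^ 2) * deriv (deriv φ) ξ
        + c * deriv (fun ξ => φ ξ + σ * deriv W (φ ξ)) ξ - deriv W (φ ξ) = 0)
    (hminus : Tendsto φ atBot (nhds 1)) (hplus : Tendsto φ atTop (nhds 0))
    (hd_minus : Tendsto (deriv φ) atBot (nhds 0))
    (hd_plus : Tendsto (deriv φ) atTop (nhds 0))
    (hint : Integrable (fun x => (1 + σ * deriv (deriv W) (φ x)) * (deriv φ x) ^ 2))
    (hpos : 0 < ∫ x, (1 + σ * deriv (deriv W) (φ x)) * (deriv φ x) ^ 2) :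
    c = (W 0 - W 1) / ∫ x, (1 + σ * deriv (deriv W) (φ x)) * (deriv φ x) ^ 2
    ∧ (0 < c ↔ W 1 < W 0) := by
  have hI := mul_integral_dissipation_eq (hW.differentiable two_ne_zero)
    hW.differentiable_deriv_two (hφ.differentiable two_ne_zero) hφ.differentiable_deriv_two
    hODE hminus hplus hd_minus hd_plus hint
  refine ⟨eq_div_of_mul_eq hpos.ne' hI, ?_⟩
  rw [← sub_pos (b := W 1), ← hI, mul_pos_iff_of_pos_right hpos]

theorem speed_formula (a τ σ c : ℝ) (ha : 0 ≤ a) (hτ : 0 ≤ τ) (hσ : 0 ≤ σ)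
    (W φ : ℝ → ℝ) (hW : ContDiff ℝ 2 W) (hφ : ContDiff ℝ 2 φ)
    (hODE : ∀ ξ, (a - τ * c ^ 2) * deriv (deriv φ) ξ
        + c * deriv (fun ξ => φ ξ + σ * deriv W (φ ξ)) ξ - deriv W (φ ξ) = 0)
    (hminus : Tendsto φ atBot (nhds 1)) (hplus : Tendsto φ atTop (nhds 0))
    (hd_minus : Tendsto (deriv φ) atBot (nhds 0))
    (hd_plus : Tendsto (deriv φ) atTop (nhds 0))
    (hint : Integrable (fun x => (1 + σ * deriv (deriv W) (φ x)) * (deriv φ x) ^ 2))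
    (hpos : 0 < ∫ x, (1 + σ * deriv (deriv W) (φ x)) * (deriv φ x) ^ 2) :
    c = (W 0 - W 1) / ∫ x, (1 + σ * deriv (deriv W) (φ x)) * (deriv φ x) ^ 2
    ∧ (0 < c ↔ W 1 < W 0) :=
  speed_formula_general a τ σ c W φ hW hφ hODE hminus hplus hd_minus hd_plus hint hpos
end
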